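/- arXiv:2404.02260 — 4 statements merged into one kernel-verified Lean document; each statement's English description precedes it below -/
import Mathlib

section
/- Assume in addition that the tangential velocity α satisfies ∂_u α(t,u) = g(t,u)·( κ(t,u) β(t,u) − ⟨κβ⟩(t) ) for all (t,u) (i.e. ∂_s α = κβ − ⟨κβ⟩). Then the relative local length is preserved: g(t,u)/L(t) = g(0,u)/L(0) for every t ≥ 0 and every u. -/
open Real MeasureTheory Function RealInnerProductSpace

local notation "E3" => EuclideanSpace ℝ (Fin 3)

/-!
Differentiating `g = ‖∂_u X‖` in time and using the symmetry of mixed partials gives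
`∂_t g = ⟪∂_u(∂_t X), T⟫`. Since `⟪∂_t X, T⟫ = α` and `∂_u T = g κ N` with `⟪∂_t X, N⟫ = β`,
this is `∂_t g = ∂_u α - g κ β`. The choice `∂_s α = κβ - ⟨κβ⟩` turns it into
`∂_t g = -⟨κβ⟩ g`, a growth rate independent of `u`. Hence `g t = λ t • g 0` for a scalar
`λ t ≠ 0`, so `L t = λ t * L 0` and the ratio `g / L` does not move.
-/

section PartialDerivatives

variable {E : Type*} [NormedAddCommGroup E] [NormedSpace ℝ E] {f : ℝ → ℝ → E} {t u : ℝ}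

theorem hasDerivAt_uncurry_snd (hf : DifferentiableAt ℝ (uncurry f) (t, u)) :
    HasDerivAt (f t ·) (fderiv ℝ (uncurry f) (t, u) (0, 1)) u := by
  simpa [comp_def] using
    hf.hasFDerivAt.comp_hasDerivAt u ((hasDerivAt_const u t).prodMk (hasDerivAt_id u))

theorem hasDerivAt_uncurry_fst (hf : DifferentiableAt ℝ (uncurry f) (t, u)) :
    HasDerivAt (f · u) (fderiv ℝ (uncurry f) (t, u) (1, 0)) t := by
  simpa [comp_def] using
    hf.hasFDerivAt.comp_hasDerivAt t ((hasDerivAt_id t).prodMk (hasDerivAt_const t u))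

theorem ContDiff.exists_hasDerivAt_partial_comm {ft fu : ℝ → ℝ → E}
    (hf : ContDiff ℝ 2 (uncurry f)) (hft : ∀ t u, HasDerivAt (f · u) (ft t u) t)
    (hfu : ∀ t u, HasDerivAt (f t ·) (fu t u) u) (t u : ℝ) :
    ∃ w, HasDerivAt (fu · u) w t ∧ HasDerivAt (ft t ·) w u := by
  set D := fderiv ℝ (uncurry f)
  have hf1 : Differentiable ℝ (uncurry f) := hf.differentiable two_ne_zero
  have hD : Differentiable ℝ D := (hf.fderiv_right (m := 1) le_rfl).differentiable one_ne_zero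
  have hfu_eq : fu = fun s w => D (s, w) (0, 1) :=
    funext₂ fun s w => (hfu s w).unique (hasDerivAt_uncurry_snd (hf1 _))
  have hft_eq : ft = fun s w => D (s, w) (1, 0) :=
    funext₂ fun s w => (hft s w).unique (hasDerivAt_uncurry_fst (hf1 _))
  refine ⟨fderiv ℝ D (t, u) (1, 0) (0, 1), ?_, ?_⟩
  · rw [hfu_eq]
    simpa using (hasDerivAt_uncurry_fst (f := curry D) (by simpa using hD _)).clm_apply
      (hasDerivAt_const t ((0, 1) : ℝ × ℝ))
  · rw [hft_eq, second_derivative_symmetric (fun q => (hf1 q).hasFDerivAt) (hD _).hasFDerivAt]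
    simpa using (hasDerivAt_uncurry_snd (f := curry D) (by simpa using hD _)).clm_apply
      (hasDerivAt_const u ((1, 0) : ℝ × ℝ))

end PartialDerivatives

section Curves

variable {F : Type*} [NormedAddCommGroup F] [InnerProductSpace ℝ F]

theorem HasDerivAt.norm_of_ne_zero {f : ℝ → F} {f' : F} {x : ℝ} (hf : HasDerivAt f f' x)
    (h0 : f x ≠ 0) : HasDerivAt (fun y => ‖f y‖) (⟪f x, f'⟫ / ‖f x‖) x := by
  have hsq : ‖f x‖ ^ 2 ≠ 0 := by positivity
  convert hf.norm_sq.sqrt hsq using 1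
  · simp only [sqrt_sq (norm_nonneg _)]
  · rw [sqrt_sq (norm_nonneg _), mul_div_mul_left _ _ two_ne_zero]

theorem inner_hasDerivAt_eq_sub_of_inner_eq {V T N : ℝ → F} {a : ℝ → ℝ} {V' : F} {a' c u : ℝ}
    (hV : HasDerivAt V V' u) (hT : HasDerivAt T (c • N u) u) (ha : HasDerivAt a a' u)
    (hVT : ∀ w, ⟪V w, T w⟫ = a w) : ⟪V', T u⟫ = a' - c * ⟪V u, N u⟫ := by
  have h := hV.inner ℝ hT
  simp only [hVT, real_inner_smul_right] at h
  linarith [h.unique ha]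

theorem hasDerivAt_speed_of_frame {X Xu V T N : ℝ → ℝ → F} {g κ α αu β : ℝ → ℝ → ℝ}
    (hX : ContDiff ℝ 2 (uncurry X)) (hXt : ∀ t u, HasDerivAt (X · u) (V t u) t)
    (hXu : ∀ t u, HasDerivAt (X t ·) (Xu t u) u) (hg : ∀ t u, g t u = ‖Xu t u‖)
    (hgpos : ∀ t u, 0 < g t u) (hT : ∀ t u, T t u = (g t u)⁻¹ • Xu t u)
    (hFrenet : ∀ t u, HasDerivAt (T t ·) ((g t u * κ t u) • N t u) u)
    (hαu : ∀ t u, HasDerivAt (α t ·) (αu t u) u) (hVT : ∀ t u, ⟪V t u, T t u⟫ = α t u)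
    (hVN : ∀ t u, ⟪V t u, N t u⟫ = β t u) (t u : ℝ) :
    HasDerivAt (g · u) (αu t u - g t u * κ t u * β t u) t := by
  obtain ⟨W, hWt, hWu⟩ := hX.exists_hasDerivAt_partial_comm hXt hXu t u
  have hWT : ⟪W, T t u⟫ = αu t u - g t u * κ t u * β t u := by
    rw [inner_hasDerivAt_eq_sub_of_inner_eq hWu (hFrenet t u) (hαu t u) (hVT t), hVN,
      mul_assoc]
  have hXu0 : Xu t u ≠ 0 := norm_pos_iff.mp (hg t u ▸ hgpos t u)
  have hg_eq : (g · u) = fun s => ‖Xu s u‖ := funext fun s => hg s u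
  rw [hg_eq, ← hWT, hT, hg t u, real_inner_smul_right, real_inner_comm]
  exact (hWt.norm_of_ne_zero hXu0).congr_deriv (div_eq_inv_mul _ _)

end Curves

section UniformGrowth

variable {g : ℝ → ℝ → ℝ} {c : ℝ → ℝ}

theorem div_eq_div_of_hasDerivAt_eq_mul (hg : ∀ t u, g t u ≠ 0)
    (hgt : ∀ t u, HasDerivAt (g · u) (c t * g t u) t) (t u w : ℝ) :
    g t u / g t w = g 0 u / g 0 w := by
  have hderiv : ∀ s, HasDerivAt (fun r => g r u / g r w) 0 s := fun s =>
    ((hgt s u).div (hgt s w) (hg s w)).congr_deriv (by ring)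
  exact is_const_of_deriv_eq_zero (fun s => (hderiv s).differentiableAt)
    (fun s => (hderiv s).deriv) t 0

theorem div_integral_eq_of_hasDerivAt_eq_mul (hg : ∀ t u, g t u ≠ 0)
    (hgt : ∀ t u, HasDerivAt (g · u) (c t * g t u) t) (a b : ℝ) (μ : Measure ℝ) (t u : ℝ) :
    g t u / ∫ w in a..b, g t w ∂μ = g 0 u / ∫ w in a..b, g 0 w ∂μ := by
  set r := g t u / g 0 u
  have hscale : ∀ w, g t w = r * g 0 w := fun w => by
    have := (div_eq_div_iff (hg t u) (hg 0 u)).mp (div_eq_div_of_hasDerivAt_eq_mul hg hgt t w u)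
    rw [div_mul_eq_mul_div, eq_div_iff (hg 0 u), this, mul_comm]
  have hr : r ≠ 0 := div_ne_zero (hg t u) (hg 0 u)
  simp only [hscale, intervalIntegral.integral_const_mul, mul_div_mul_left _ _ hr]

end UniformGrowth

theorem uniform_redistribution_preserves_relative_local_length_general
    (X Xu : ℝ → ℝ → E3)
    (g κ α αu β γ : ℝ → ℝ → ℝ)
    (T N B : ℝ → ℝ → E3)
    (L : ℝ → ℝ)
    (hX2 : ContDiff ℝ 2 (uncurry X))
    (hXu : ∀ t u, HasDerivAt (fun w => X t w) (Xu t u) u)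
    (hg : ∀ t u, g t u = ‖Xu t u‖)
    (hgpos : ∀ t u, 0 < g t u)
    (hT : ∀ t u, T t u = (g t u)⁻¹ • Xu t u)
    (hNnorm : ∀ t u, ‖N t u‖ = 1)
    (hTN : ∀ t u, ⟪T t u, N t u⟫ = 0)
    (hTB : ∀ t u, ⟪T t u, B t u⟫ = 0)
    (hNB : ∀ t u, ⟪N t u, B t u⟫ = 0)
    (hFrenet : ∀ t u, HasDerivAt (fun w => T t w) ((g t u * κ t u) • N t u) u)
    (hαu : ∀ t u, HasDerivAt (fun w => α t w) (αu t u) u)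
    (hevol : ∀ t u, HasDerivAt (fun s => X s u)
      (β t u • N t u + γ t u • B t u + α t u • T t u) t)
    (hL : ∀ t, L t = ∫ u in (0:ℝ)..1, g t u)

    (hαeq : ∀ t u, αu t u = g t u * (κ t u * β t u
      - (L t)⁻¹ * (∫ w in (0:ℝ)..1, κ t w * β t w * g t w))) :
    ∀ t : ℝ, 0 ≤ t → ∀ u : ℝ, g t u / L t = g 0 u / L 0 := by
  intro t _ u
  have hTT : ∀ t u, ⟪T t u, T t u⟫ = 1 := fun t u => by
    rw [real_inner_self_eq_norm_sq, hT, norm_smul, ← hg,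
      norm_of_nonneg (inv_nonneg.2 (hgpos t u).le), inv_mul_cancel₀ (hgpos t u).ne', one_pow]
  have hNN : ∀ t u, ⟪N t u, N t u⟫ = 1 := fun t u => by
    rw [real_inner_self_eq_norm_sq, hNnorm, one_pow]
  have hVT : ∀ t u, ⟪β t u • N t u + γ t u • B t u + α t u • T t u, T t u⟫ = α t u :=
    fun t u => by
      rw [real_inner_comm]
      simp only [inner_add_right, real_inner_smul_right, hTN, hTB, hTT]
      ring
  have hVN : ∀ t u, ⟪β t u • N t u + γ t u • B t u + α t u • T t u, N t u⟫ = β t u :=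
    fun t u => by
      rw [real_inner_comm]
      simp only [inner_add_right, real_inner_smul_right, real_inner_comm (T t u) (N t u), hTN, hNB,
        hNN]
      ring
  have hgt : ∀ s w, HasDerivAt (g · w)
      (-((L s)⁻¹ * ∫ v in (0:ℝ)..1, κ s v * β s v * g s v) * g s w) s := fun s w =>
    (hasDerivAt_speed_of_frame hX2 hevol hXu hg hgpos hT hFrenet hαu hVT hVN s w).congr_deriv
      (by rw [hαeq]; ring)
  simpa only [hL] using div_integral_eq_of_hasDerivAt_eq_mul (fun t u => (hgpos t u).ne') hgt
    0 1 volume t u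

/-- Context: an evolving family of closed space curves `Γ_t` parameterized by `X t u`,
with local length `g = ‖∂_u X‖ > 0`, unit tangent `T = g⁻¹ • ∂_u X`, Frenet-type frame
`(T, N, B)`, curvature `κ` (with `∂_u T = g κ N`), evolving by
`∂_t X = β N + γ B + α T`, and total length `L t = ∫₀¹ g t u du`. -/
theorem uniform_redistribution_preserves_relative_local_length
    (X Xu : ℝ → ℝ → E3)
    (g κ α αu β γ : ℝ → ℝ → ℝ)
    (T N B : ℝ → ℝ → E3)
    (L : ℝ → ℝ)
    (hX2 : ContDiff ℝ 2 (uncurry X))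
    (hXper : ∀ t u, X t (u + 1) = X t u)
    (hXu : ∀ t u, HasDerivAt (fun w => X t w) (Xu t u) u)
    (hg : ∀ t u, g t u = ‖Xu t u‖)
    (hgpos : ∀ t u, 0 < g t u)
    (hT : ∀ t u, T t u = (g t u)⁻¹ • Xu t u)
    (hN1 : ContDiff ℝ 1 (uncurry N))
    (hB1 : ContDiff ℝ 1 (uncurry B))
    (hNper : ∀ t u, N t (u + 1) = N t u)
    (hBper : ∀ t u, B t (u + 1) = B t u)
    (hNnorm : ∀ t u, ‖N t u‖ = 1)
    (hBnorm : ∀ t u, ‖B t u‖ = 1)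
    (hTN : ∀ t u, ⟪T t u, N t u⟫ = 0)
    (hTB : ∀ t u, ⟪T t u, B t u⟫ = 0)
    (hNB : ∀ t u, ⟪N t u, B t u⟫ = 0)
    (hκc : Continuous (uncurry κ))
    (hFrenet : ∀ t u, HasDerivAt (fun w => T t w) ((g t u * κ t u) • N t u) u)
    (hα1 : ContDiff ℝ 1 (uncurry α))
    (hβ1 : ContDiff ℝ 1 (uncurry β))
    (hγ1 : ContDiff ℝ 1 (uncurry γ))
    (hαper : ∀ t u, α t (u + 1) = α t u)
    (hβper : ∀ t u, β t (u + 1) = β t u)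
    (hγper : ∀ t u, γ t (u + 1) = γ t u)
    (hαu : ∀ t u, HasDerivAt (fun w => α t w) (αu t u) u)
    (hevol : ∀ t u, HasDerivAt (fun s => X s u)
      (β t u • N t u + γ t u • B t u + α t u • T t u) t)
    (hL : ∀ t, L t = ∫ u in (0:ℝ)..1, g t u)

    (hαeq : ∀ t u, αu t u = g t u * (κ t u * β t u
      - (L t)⁻¹ * (∫ w in (0:ℝ)..1, κ t w * β t w * g t w))) :
    ∀ t : ℝ, 0 ≤ t → ∀ u : ℝ, g t u / L t = g 0 u / L 0 :=
  uniform_redistribution_preserves_relative_local_length_general X Xu g κ α αu β γ T N B L hX2 hXu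
    hg hgpos hT hNnorm hTN hTB hNB hFrenet hαu hevol hL hαeq
end

section
/- Let P : ℝ² → ℝ be continuous, let r, a : ℝ → ℝ be differentiable with r(t) > 0 and a(t) > 0 for all t, let ω : ℝ → ℝ be differentiable with r(t) ω'(t) = 1, and let Q(t) be the 3×3 matrix with rows (cos ω(t), 0, −sin ω(t)), (0, 1, 0), (sin ω(t), 0, cos ω(t)). Define X(u,t) := r(t) Q(t) X̂(u) (circular curves of radius r(t) in a rotating plane), ρ(u,t) := a(t) cos 2πu, N(u,t) := −Q(t) X̂(u), B(u,t) := Q(t) e₃, κ(t) := 1/r(t), β(t) := −P(r(t), a(t)), γ(u) := cos 2πu and q(u) := cos 2πu. Then the pair (X, ρ) satisfies the coupled system ∂_t X(u,t) = β(t) N(u,t) + γ(u) B(u,t) and ∂_t ρ(u,t) − κ(t) β(t) ρ(u,t) = (2π r(t))^{−2} ∂_u² ρ(u,t) + q(u) for all (u,t) if and only if (r, a) solves the planar ODE system r'(t) = P(r(t), a(t)) and a'(t) = −(a(t)/r(t)) P(r(t), a(t)) − a(t)/r(t)² + 1 for all t. -/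
open Real Matrix Function

noncomputable def toE3 (v : Fin 3 → ℝ) : EuclideanSpace ℝ (Fin 3) :=
  (WithLp.equiv 2 (Fin 3 → ℝ)).symm v

/-!
Differentiating `X(u,t) = r(t) Q(ω(t)) X̂(u)` in `t` gives `r' Q X̂ + r ω' cos 2πu · Q e₃`, and
`r ω' = 1` turns the second term into exactly the binormal part `γ B` of the prescribed velocity.
So the curve equation reduces to `(r' − P(r,a)) Q X̂ = 0`, i.e. `r' = P(r,a)` (at `u = 1/4`,
`Q X̂ = e₂`). Likewise `∂_t ρ = a' cos 2πu`, while the right-hand side of the scalar equation,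
using `∂_u² ρ = −(2π)² ρ`, equals `(−(a/r) P(r,a) − a/r² + 1) cos 2πu`.
-/

theorem HasDerivAt.hasDerivAt_iff_eq {E : Type*} [NormedAddCommGroup E] [NormedSpace ℝ E]
    {f : ℝ → E} {f₀' f₁' : E} {x : ℝ} (h : HasDerivAt f f₀' x) :
    HasDerivAt f f₁' x ↔ f₀' = f₁' :=
  ⟨h.unique, fun e => e ▸ h⟩

theorem forall_smul_eq_smul_iff {ι R M : Type*} [Ring R] [IsCancelMulZero R] [AddCommGroup M]
    [Module R M] [Module.IsTorsionFree R M] {V : ι → M} (hV : ∃ i, V i ≠ 0) {α β : R} :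
    (∀ i, α • V i = β • V i) ↔ α = β := by
  obtain ⟨i, hi⟩ := hV
  exact ⟨fun h => (smul_left_inj hi).1 (h i), fun h _ => h ▸ rfl⟩

theorem HasDerivAt.toE3 {f : ℝ → Fin 3 → ℝ} {f' : Fin 3 → ℝ} {t : ℝ} (h : HasDerivAt f f' t) :
    HasDerivAt (fun s => toE3 (f s)) (toE3 f') t :=
  (PiLp.continuousLinearEquiv 2 ℝ fun _ : Fin 3 => ℝ).symm.hasFDerivAt.comp_hasDerivAt t h

theorem toE3_smul (c : ℝ) (v : Fin 3 → ℝ) : toE3 (c • v) = c • toE3 v := rfl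

theorem toE3_ne_zero {v : Fin 3 → ℝ} (hv : v ≠ 0) : toE3 v ≠ 0 :=
  (WithLp.equiv 2 (Fin 3 → ℝ)).symm.injective.ne hv

theorem deriv_deriv_const_mul_cos (c k u : ℝ) :
    deriv (deriv fun w => c * cos (k * w)) u = -(c * k ^ 2) * cos (k * u) := by
  have hk : ∀ w, HasDerivAt (fun w => k * w) k w := fun w => by
    simpa using (hasDerivAt_id w).const_mul k
  have h₁ : deriv (fun w => c * cos (k * w)) = fun w => -(c * k) * sin (k * w) :=
    funext fun w => ((hk w).cos.const_mul c).deriv.trans (by ring)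
  rw [h₁, ((hk u).sin.const_mul _).deriv]
  ring

noncomputable def rotXZ (θ : ℝ) : Matrix (Fin 3) (Fin 3) ℝ :=
  !![cos θ, 0, -sin θ; 0, 1, 0; sin θ, 0, cos θ]

theorem rotXZ_mulVec (θ x y z : ℝ) :
    rotXZ θ *ᵥ ![x, y, z] = ![cos θ * x - sin θ * z, y, sin θ * x + cos θ * z] := by
  ext i
  fin_cases i <;> simp [rotXZ, Matrix.mulVec, dotProduct, Fin.sum_univ_three]
  ring

theorem rotXZ_mulVec_ne_zero (θ x z : ℝ) {y : ℝ} (hy : y ≠ 0) : rotXZ θ *ᵥ ![x, y, z] ≠ 0 :=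
  fun h => hy (by simpa [rotXZ_mulVec] using congrFun h 1)

theorem hasDerivAt_rotXZ_mulVec (x y θ : ℝ) :
    HasDerivAt (fun φ => rotXZ φ *ᵥ ![x, y, 0]) (x • rotXZ θ *ᵥ ![0, 0, 1]) θ := by
  simp only [rotXZ_mulVec, mul_zero, sub_zero, add_zero, mul_one, zero_sub, zero_add]
  refine hasDerivAt_pi.2 fun i => ?_
  fin_cases i
  · simpa [mul_comm x] using (hasDerivAt_cos θ).mul_const x
  · simpa using hasDerivAt_const θ y
  · simpa [mul_comm x] using (hasDerivAt_sin θ).mul_const x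

theorem hasDerivAt_rotating_circle {r ω : ℝ → ℝ} {r' ω' t : ℝ} (hr : HasDerivAt r r' t)
    (hω : HasDerivAt ω ω' t) (x y : ℝ) :
    HasDerivAt (fun s => r s • toE3 (rotXZ (ω s) *ᵥ ![x, y, 0]))
      (r' • toE3 (rotXZ (ω t) *ᵥ ![x, y, 0])
        + (r t * ω' * x) • toE3 (rotXZ (ω t) *ᵥ ![0, 0, 1])) t := by
  refine (hr.smul ((hasDerivAt_rotXZ_mulVec x y (ω t)).scomp t hω).toE3).congr_deriv ?_
  simp only [Function.comp_apply, toE3_smul, smul_smul]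
  rw [add_comm, mul_assoc]

theorem rotating_circles_coupled_system_iff_ODE_general
    (P : ℝ → ℝ → ℝ)
    (r a ω : ℝ → ℝ)
    (hr : Differentiable ℝ r) (ha : Differentiable ℝ a)
    (hrpos : ∀ t, 0 < r t)
    (hω : Differentiable ℝ ω) (hrω : ∀ t, r t * deriv ω t = 1)
    (Q : ℝ → Matrix (Fin 3) (Fin 3) ℝ)
    (hQ : ∀ t, Q t = !![Real.cos (ω t), 0, -Real.sin (ω t);
                        0, 1, 0;
                        Real.sin (ω t), 0, Real.cos (ω t)])
    (X : ℝ → ℝ → EuclideanSpace ℝ (Fin 3))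
    (hX : ∀ u t, X u t = r t • toE3 ((Q t).mulVec ![Real.cos (2*π*u), Real.sin (2*π*u), 0]))
    (ρ : ℝ → ℝ → ℝ)
    (hρ : ∀ u t, ρ u t = a t * Real.cos (2*π*u)) :
    ((∀ u t : ℝ, HasDerivAt (fun s => X u s)
        ((-P (r t) (a t)) • (-(toE3 ((Q t).mulVec ![Real.cos (2*π*u), Real.sin (2*π*u), 0])))
          + Real.cos (2*π*u) • toE3 ((Q t).mulVec ![0, 0, 1])) t)
      ∧ (∀ u t : ℝ, HasDerivAt (fun s => ρ u s)
          ((r t)⁻¹ * (-P (r t) (a t)) * ρ u t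
            + ((2*π*r t)^2)⁻¹ * deriv (deriv (fun w => ρ w t)) u
            + Real.cos (2*π*u)) t))
    ↔
    (∀ t : ℝ, deriv r t = P (r t) (a t)
      ∧ deriv a t = -(a t / r t) * P (r t) (a t) - a t / (r t)^2 + 1) := by
  obtain rfl : Q = fun t => rotXZ (ω t) := funext hQ
  obtain rfl : X = fun u t => r t • toE3 (rotXZ (ω t) *ᵥ ![cos (2*π*u), sin (2*π*u), 0]) :=
    funext₂ hX
  obtain rfl : ρ = fun u t => a t * cos (2*π*u) := funext₂ hρ
  have hXdot : ∀ u t,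
      HasDerivAt (fun s => r s • toE3 (rotXZ (ω s) *ᵥ ![cos (2*π*u), sin (2*π*u), 0]))
      (deriv r t • toE3 (rotXZ (ω t) *ᵥ ![cos (2*π*u), sin (2*π*u), 0])
        + cos (2*π*u) • toE3 (rotXZ (ω t) *ᵥ ![0, 0, 1])) t := fun u t => by
    simpa only [hrω t, one_mul] using
      hasDerivAt_rotating_circle (hr t).hasDerivAt (hω t).hasDerivAt (cos (2*π*u)) (sin (2*π*u))
  have hρdot : ∀ u t, HasDerivAt (fun s => a s * cos (2*π*u)) (deriv a t * cos (2*π*u)) t :=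
    fun u t => (ha t).hasDerivAt.mul_const _
  have hρrhs : ∀ u t, (r t)⁻¹ * (-P (r t) (a t)) * (a t * cos (2*π*u))
      + ((2*π*r t)^2)⁻¹ * deriv (deriv (fun w => a t * cos (2*π*w))) u + cos (2*π*u)
      = (-(a t / r t) * P (r t) (a t) - a t / (r t)^2 + 1) * cos (2*π*u) := fun u t => by
    rw [deriv_deriv_const_mul_cos]
    field_simp [(hrpos t).ne', pi_ne_zero]
    ring
  have hX₀ : ∀ t, ∃ u, toE3 (rotXZ (ω t) *ᵥ ![cos (2*π*u), sin (2*π*u), 0]) ≠ 0 := fun t =>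
    ⟨1/4, toE3_ne_zero <| rotXZ_mulVec_ne_zero _ _ _ <| by
      rw [show 2*π*(1/4 : ℝ) = π/2 by ring, sin_pi_div_two]
      exact one_ne_zero⟩
  simp only [(hXdot _ _).hasDerivAt_iff_eq, (hρdot _ _).hasDerivAt_iff_eq, neg_smul_neg,
    add_left_inj, hρrhs]
  refine (and_congr forall_comm forall_comm).trans <|
    forall_and.symm.trans <| forall_congr' fun t => ?_
  exact and_congr (forall_smul_eq_smul_iff (hX₀ t))
    (forall_smul_eq_smul_iff (R := ℝ) (V := fun u => cos (2*π*u)) ⟨0, by simp⟩)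

/-- The pair `(X, ρ)` of circles `X(u,t) = r(t) Q(t) X̂(u)` in rotating planes and scalar
quantity `ρ(u,t) = a(t) cos 2πu` solves the coupled system `∂_t X = β N + γ B`,
`∂_t ρ − κ β ρ = (2πr)⁻² ∂_u² ρ + q` (with `β = −P(r,a)`, `γ = q = cos 2πu`, `κ = 1/r`,
`N = −Q X̂`, `B = Q e₃`) iff `(r, a)` solves the planar ODE system
`r' = P(r,a)`, `a' = −(a/r) P(r,a) − a/r² + 1`. -/
theorem rotating_circles_coupled_system_iff_ODE
    (P : ℝ → ℝ → ℝ) (hP : Continuous (uncurry P))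
    (r a ω : ℝ → ℝ)
    (hr : Differentiable ℝ r) (ha : Differentiable ℝ a)
    (hrpos : ∀ t, 0 < r t) (hapos : ∀ t, 0 < a t)
    (hω : Differentiable ℝ ω) (hrω : ∀ t, r t * deriv ω t = 1)
    (Q : ℝ → Matrix (Fin 3) (Fin 3) ℝ)
    (hQ : ∀ t, Q t = !![Real.cos (ω t), 0, -Real.sin (ω t);
                        0, 1, 0;
                        Real.sin (ω t), 0, Real.cos (ω t)])
    (X : ℝ → ℝ → EuclideanSpace ℝ (Fin 3))
    (hX : ∀ u t, X u t = r t • toE3 ((Q t).mulVec ![Real.cos (2*π*u), Real.sin (2*π*u), 0]))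
    (ρ : ℝ → ℝ → ℝ)
    (hρ : ∀ u t, ρ u t = a t * Real.cos (2*π*u)) :
    ((∀ u t : ℝ, HasDerivAt (fun s => X u s)
        ((-P (r t) (a t)) • (-(toE3 ((Q t).mulVec ![Real.cos (2*π*u), Real.sin (2*π*u), 0])))
          + Real.cos (2*π*u) • toE3 ((Q t).mulVec ![0, 0, 1])) t)
      ∧ (∀ u t : ℝ, HasDerivAt (fun s => ρ u s)
          ((r t)⁻¹ * (-P (r t) (a t)) * ρ u t
            + ((2*π*r t)^2)⁻¹ * deriv (deriv (fun w => ρ w t)) u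
            + Real.cos (2*π*u)) t))
    ↔
    (∀ t : ℝ, deriv r t = P (r t) (a t)
      ∧ deriv a t = -(a t / r t) * P (r t) (a t) - a t / (r t)^2 + 1) :=
  rotating_circles_coupled_system_iff_ODE_general P r a ω hr ha hrpos hω hrω Q hQ X hX ρ hρ
end

section
/- Let λ > 1, P(r,a) := r² − λ a + 1, r̃ := 1/√(λ−1) and ã := 1/(λ−1), and let A be the Jacobian matrix at (r̃, ã) of the vector field V(r,a) := ( P(r,a), −(a/r) P(r,a) − a/r² + 1 ) defined for r > 0. Then trace(A) = (λ+2)/√(λ−1) − λ + 1 and det(A) = 2 (λ−1)^{3/2}; in particular det(A) > 0. -/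
/-!
Differentiating `V` by the quotient rule gives its Jacobian at any point with `r ≠ 0`. At the
steady state `P = 0` and `a = r²`; writing `s = √(λ - 1)`, so that `r = 1/s`, `a = 1/s²` and
`λ = s² + 1`, the trace and determinant are rational functions of `s`, and clearing denominators
gives `(λ + 2)/s - λ + 1` and `2 s³ = 2 (λ - 1)^{3/2}`.
-/

open Real ContinuousLinearMap

noncomputable section

def fieldPoly (lam : ℝ) (x : ℝ × ℝ) : ℝ := x.1 ^ 2 - lam * x.2 + 1

def vectorField (lam : ℝ) (x : ℝ × ℝ) : ℝ × ℝ :=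
  (fieldPoly lam x, -(x.2 / x.1) * fieldPoly lam x - x.2 / x.1 ^ 2 + 1)

def clmOfEntries (a b c d : ℝ) : ℝ × ℝ →L[ℝ] ℝ × ℝ :=
  (a • fst ℝ ℝ ℝ + b • snd ℝ ℝ ℝ).prod (c • fst ℝ ℝ ℝ + d • snd ℝ ℝ ℝ)

@[simp]
theorem clmOfEntries_apply (a b c d : ℝ) (v : ℝ × ℝ) :
    clmOfEntries a b c d v = (a * v.1 + b * v.2, c * v.1 + d * v.2) := by
  simp [clmOfEntries]

def jacobian (lam : ℝ) (x : ℝ × ℝ) : ℝ × ℝ →L[ℝ] ℝ × ℝ :=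
  let r := x.1
  let a := x.2
  let p := fieldPoly lam x
  clmOfEntries (2 * r) (-lam)
    (a * p / r ^ 2 - 2 * a + 2 * a / r ^ 3) (-p / r + lam * a / r - 1 / r ^ 2)

theorem hasFDerivAt_vectorField (lam : ℝ) {x : ℝ × ℝ} (hx : x.1 ≠ 0) :
    HasFDerivAt (vectorField lam) (jacobian lam x) x := by
  have hr := (hasFDerivAt_fst (𝕜 := ℝ) (p := x) (E := ℝ) (F := ℝ))
  have ha := (hasFDerivAt_snd (𝕜 := ℝ) (p := x) (E := ℝ) (F := ℝ))
  have hp := ((hr.pow 2).sub (ha.const_mul lam)).add_const 1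
  have hinv : HasFDerivAt (fun y : ℝ × ℝ => y.1⁻¹) _ x := (hasFDerivAt_inv hx).comp x hr
  have h2 := (((ha.mul hinv).neg.mul hp).sub (ha.mul (hinv.pow 2))).add_const 1
  refine (hp.prodMk h2).congr_of_eventuallyEq ?_ |>.congr_fderiv ?_
  · exact .of_forall fun y => by simp [vectorField, fieldPoly, div_eq_mul_inv, inv_pow]
  · ext <;>
      simp only [jacobian, fieldPoly, clmOfEntries_apply, Nat.add_one_sub_one, pow_one, comp_apply,
        ContinuousLinearMap.prod_apply, add_apply, sub_apply, neg_apply, smul_apply, coe_fst',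
        coe_snd', toSpanSingleton_apply, inl_apply, inr_apply, smul_eq_mul, nsmul_eq_mul,
        Pi.mul_apply, Pi.neg_apply, Pi.sub_apply] <;>
      field_simp <;> ring

section SteadyState

variable {lam s : ℝ} (hs : 0 < s) (hlam : lam = s ^ 2 + 1)
include hs hlam

theorem jacobian_trace_steadyState :
    (jacobian lam (1 / s, 1 / s ^ 2) (1, 0)).1 + (jacobian lam (1 / s, 1 / s ^ 2) (0, 1)).2
      = (lam + 2) / s - lam + 1 := by
  subst hlam
  simp only [jacobian, fieldPoly, clmOfEntries_apply]
  field_simp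
  ring

theorem jacobian_det_steadyState :
    (jacobian lam (1 / s, 1 / s ^ 2) (1, 0)).1 * (jacobian lam (1 / s, 1 / s ^ 2) (0, 1)).2
      - (jacobian lam (1 / s, 1 / s ^ 2) (0, 1)).1 * (jacobian lam (1 / s, 1 / s ^ 2) (1, 0)).2
      = 2 * s ^ 3 := by
  subst hlam
  simp only [jacobian, fieldPoly, clmOfEntries_apply]
  field_simp
  ring

end SteadyState

end

/-- For `λ > 1`, `P(r,a) = r² − λa + 1`, at the steady state
`(r̃, ã) = (1/√(λ−1), 1/(λ−1))` the Jacobian `A` of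
`V(r,a) = (P(r,a), −(a/r)P(r,a) − a/r² + 1)` has
`trace(A) = (λ+2)/√(λ−1) − λ + 1` and `det(A) = 2(λ−1)^{3/2} > 0`. -/
theorem jacobian_trace_det_at_steady_state
    (lam : ℝ) (hlam : 1 < lam)
    (P : ℝ × ℝ → ℝ) (hP : ∀ x : ℝ × ℝ, P x = x.1^2 - lam*x.2 + 1)
    (r0 a0 : ℝ) (hr0 : r0 = 1/Real.sqrt (lam - 1)) (ha0 : a0 = 1/(lam - 1))
    (V : ℝ × ℝ → ℝ × ℝ)
    (hV : ∀ x : ℝ × ℝ, V x = (P x, -(x.2/x.1) * P x - x.2/x.1^2 + 1)) :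
    ∃ A : ℝ × ℝ →L[ℝ] ℝ × ℝ, HasFDerivAt V A (r0, a0) ∧
      (A (1, 0)).1 + (A (0, 1)).2 = (lam + 2)/Real.sqrt (lam - 1) - lam + 1 ∧
      (A (1, 0)).1 * (A (0, 1)).2 - (A (0, 1)).1 * (A (1, 0)).2
        = 2*(lam - 1) ^ ((3:ℝ)/2) ∧
      0 < (A (1, 0)).1 * (A (0, 1)).2 - (A (0, 1)).1 * (A (1, 0)).2 := by
  set s := √(lam - 1)
  have hlam1 : 0 ≤ lam - 1 := by linarith
  have hs : 0 < s := sqrt_pos.2 (by linarith)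
  have hlam_s : lam = s ^ 2 + 1 := by rw [sq_sqrt hlam1]; ring
  have hV_eq : V = vectorField lam := funext fun x => by simp only [hV, hP, vectorField, fieldPoly]
  have hx : (r0, a0) = (1 / s, 1 / s ^ 2) := by rw [hr0, ha0, sq_sqrt hlam1]
  have hdet := jacobian_det_steadyState hs hlam_s
  refine ⟨jacobian lam (r0, a0), hV_eq ▸ hasFDerivAt_vectorField lam (by rw [hx]; positivity),
    ?_, ?_, ?_⟩ <;> rw [hx]
  · exact jacobian_trace_steadyState hs hlam_s
  · rw [hdet, rpow_div_two_eq_sqrt 3 hlam1]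
    norm_cast
  · rw [hdet]
    positivity
end

section
/- Define f : (1, ∞) → ℝ by f(λ) := (λ+2)/√(λ−1) − λ + 1. Then: (i) f is strictly decreasing on (1, ∞); (ii) there exists a unique λ₀ ∈ (1, ∞) with f(λ₀) = 0; (iii) f(λ) > 0 for 1 < λ < λ₀ and f(λ) < 0 for λ > λ₀; and (iv) 4.47 < λ₀ < 4.48. -/
open Real

/-- The trace function `f(λ) = (λ+2)/√(λ−1) − λ + 1` is strictly decreasing on `(1, ∞)`,
has a unique zero `λ₀` there, is positive before `λ₀` and negative after, and
`4.47 < λ₀ < 4.48`. -/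
theorem trace_function_unique_zero
    (f : ℝ → ℝ) (hf : ∀ l, f l = (l + 2)/Real.sqrt (l - 1) - l + 1) :
    StrictAntiOn f (Set.Ioi 1)
    ∧ ∃ l0 : ℝ, 1 < l0 ∧ f l0 = 0
        ∧ (∀ l, 1 < l → f l = 0 → l = l0)
        ∧ (∀ l, 1 < l → l < l0 → 0 < f l)
        ∧ (∀ l, l0 < l → f l < 0)
        ∧ (4.47 : ℝ) < l0 ∧ l0 < (4.48 : ℝ) := by
  have key : StrictAntiOn f (Set.Ioi 1) := by
    intro a ha b hb hab
    simp only [Set.mem_Ioi] at ha hb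
    set s := Real.sqrt (a - 1) with hsdef
    set t := Real.sqrt (b - 1) with htdef
    have hs0 : 0 < s := Real.sqrt_pos.2 (by linarith)
    have ht0 : 0 < t := Real.sqrt_pos.2 (by linarith)
    have hs2 : s ^ 2 = a - 1 := Real.sq_sqrt (by linarith)
    have ht2 : t ^ 2 = b - 1 := Real.sq_sqrt (by linarith)
    have hst : s < t := Real.sqrt_lt_sqrt (by linarith) (by linarith)
    rw [hf a, hf b]
    have hdiff : (b + 2)/t - (a + 2)/s = ((b + 2) * s - (a + 2) * t)/(t * s) := by
      field_simp
    have hpos : 0 < s * t * (s + t - 1) + 3 := by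
      nlinarith [sq_nonneg (s - t), sq_nonneg (s + t - 1), mul_pos hs0 ht0,
        sq_nonneg (s + t), mul_pos (mul_pos hs0 ht0) (mul_pos hs0 ht0)]
    have hlt : ((b + 2) * s - (a + 2) * t)/(t * s) < b - a := by
      rw [div_lt_iff₀ (by positivity)]
      have hA : a = s ^ 2 + 1 := by linarith
      have hB : b = t ^ 2 + 1 := by linarith
      rw [hA, hB]
      nlinarith [mul_pos (sub_pos.2 hst) hpos]
    have := hdiff ▸ hlt
    linarith
  have hcont : ContinuousOn f (Set.Icc (4.47 : ℝ) 4.48) := by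
    have hfeq : f = fun l => (l + 2)/Real.sqrt (l - 1) - l + 1 := funext hf
    rw [hfeq]
    apply ContinuousOn.add
    · apply ContinuousOn.sub
      · apply ContinuousOn.div (by fun_prop) (by fun_prop)
        intro x hx
        have : (4.47 : ℝ) ≤ x := hx.1
        exact ne_of_gt (Real.sqrt_pos.2 (by linarith))
      · fun_prop
    · fun_prop
  have h347 : (0:ℝ) < Real.sqrt 3.47 := Real.sqrt_pos.2 (by norm_num)
  have h348 : (0:ℝ) < Real.sqrt 3.48 := Real.sqrt_pos.2 (by norm_num)
  have hs47 : Real.sqrt 3.47 < 6.47/3.47 := by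
    rw [show (6.47/3.47:ℝ) = Real.sqrt ((6.47/3.47)^2) from (Real.sqrt_sq (by norm_num)).symm]
    exact Real.sqrt_lt_sqrt (by norm_num) (by norm_num)
  have hs48 : (6.48:ℝ)/3.48 < Real.sqrt 3.48 := by
    rw [show (6.48/3.48:ℝ) = Real.sqrt ((6.48/3.48)^2) from (Real.sqrt_sq (by norm_num)).symm]
    exact Real.sqrt_lt_sqrt (by norm_num) (by norm_num)
  have hf47 : 0 < f 4.47 := by
    rw [hf]
    have he : (4.47 - 1 : ℝ) = 3.47 := by norm_num
    rw [he]
    have h1 : (3.47:ℝ) < 6.47 / Real.sqrt 3.47 := by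
      rw [lt_div_iff₀ h347]; nlinarith
    have : (4.47 + 2 : ℝ) = 6.47 := by norm_num
    rw [this]; linarith
  have hf48 : f 4.48 < 0 := by
    rw [hf]
    have he : (4.48 - 1 : ℝ) = 3.48 := by norm_num
    rw [he]
    have h1 : (6.48:ℝ) / Real.sqrt 3.48 < 3.48 := by
      rw [div_lt_iff₀ h348]; nlinarith
    have : (4.48 + 2 : ℝ) = 6.48 := by norm_num
    rw [this]; linarith
  have hmem : (0:ℝ) ∈ Set.Icc (f 4.48) (f 4.47) := ⟨le_of_lt hf48, le_of_lt hf47⟩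
  obtain ⟨l0, hl0mem, hl0⟩ := intermediate_value_Icc' (by norm_num) hcont hmem
  obtain ⟨hl0a, hl0b⟩ := hl0mem
  have hl0lt : (4.47:ℝ) < l0 := by
    rcases lt_or_eq_of_le hl0a with h | h
    · exact h
    · exfalso; rw [h] at hf47; rw [hl0] at hf47; exact lt_irrefl 0 hf47
  have hl0lt' : l0 < (4.48:ℝ) := by
    rcases lt_or_eq_of_le hl0b with h | h
    · exact h
    · exfalso; rw [h] at hl0; rw [hl0] at hf48; exact lt_irrefl 0 hf48
  have h1l0 : (1:ℝ) < l0 := by linarith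
  have hl0Ioi : l0 ∈ Set.Ioi (1:ℝ) := h1l0
  refine ⟨key, l0, h1l0, hl0, ?_, ?_, ?_, hl0lt, hl0lt'⟩
  · intro l hl hfl
    rcases lt_trichotomy l l0 with h | h | h
    · have := key (Set.mem_Ioi.2 hl) hl0Ioi h
      rw [hfl, hl0] at this; exact absurd this (lt_irrefl 0)
    · exact h
    · have := key hl0Ioi (Set.mem_Ioi.2 hl) h
      rw [hfl, hl0] at this; exact absurd this (lt_irrefl 0)
  · intro l hl hll0
    have := key (Set.mem_Ioi.2 hl) hl0Ioi hll0
    rw [hl0] at this; linarith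
  · intro l hl
    have := key hl0Ioi (Set.mem_Ioi.2 (by linarith)) hl
    rw [hl0] at this; linarith
end
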